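/- Dynamical singular regime integration away from the boundary (Lemma 5.8). There exists a constant C > 0 depending only on Ω such that for every 0 < ε < 1, all 0 < t ≤ 1, all x ∈ Ω with d(x,∂Ω) ≥ ε, all v ∈ ℝ³, and all ϖ > 1: ∫₀ᵗ e^{−ϖ⟨v⟩²(t−s)} ln( 1 + 1/d(X(s;t,x,v), ∂Ω) ) ds ≤ (C/(√ϖ · ⟨v⟩)) · ln(1 + 1/ε). -/

import Mathlib

open MeasureTheory Set
open scoped RealInnerProductSpace

noncomputable section

abbrev E3 : Type := EuclideanSpace ℝ (Fin 3)

/-- The exterior domain `Ω = {ξ < 0}`. -/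
def domOmega (ξ : E3 → ℝ) : Set E3 := {x | ξ x < 0}

/-- The boundary `∂Ω = {ξ = 0}`. -/
def bdryOmega (ξ : E3 → ℝ) : Set E3 := {x | ξ x = 0}

/-- The backward ray from `(x,v)` leaves `Ω` in finite time, i.e. `t_b(x,v) < ∞`. -/
def HitsBdry (ξ : E3 → ℝ) (x v : E3) : Prop :=
  ∃ τ > (0 : ℝ), x - τ • v ∉ domOmega ξ

/-- The backward exit time `t_b(x,v)`. -/
def tb (ξ : E3 → ℝ) (x v : E3) : ℝ :=
  sSup {s : ℝ | 0 ≤ s ∧ ∀ τ ∈ Set.Ioo (0 : ℝ) s, x - τ • v ∈ domOmega ξ}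

/-- The backward exit position `x_b(x,v)`. -/
def xbpos (ξ : E3 → ℝ) (x v : E3) : E3 := x - tb ξ x v • v

/-- Outward unit normal `n(y) = ∇ξ(y)/|∇ξ(y)|`. -/
def nvec (ξ : E3 → ℝ) (y : E3) : E3 := ‖gradient ξ y‖⁻¹ • gradient ξ y

/-- Specular reflection `R_y w = w − 2 (n(y)·w) n(y)`. -/
def specR (ξ : E3 → ℝ) (y w : E3) : E3 := w - (2 * ⟪nvec ξ y, w⟫) • nvec ξ y

open Classical in
/-- Billiard trajectory position `X(s;t,x,v)`. -/
def Xtr (ξ : E3 → ℝ) (s t : ℝ) (x v : E3) : E3 :=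
  if HitsBdry ξ x v ∧ s ≤ t - tb ξ x v then
    xbpos ξ x v - (t - tb ξ x v - s) • specR ξ (xbpos ξ x v) v
  else x - (t - s) • v

open Classical in
/-- Billiard trajectory velocity `V(s;t,x,v)`. -/
def Vtr (ξ : E3 → ℝ) (s t : ℝ) (x v : E3) : E3 :=
  if HitsBdry ξ x v ∧ s ≤ t - tb ξ x v then specR ξ (xbpos ξ x v) v else v

/-- Japanese bracket `⟨v⟩ = √(1+|v|²)`. -/
def jap (v : E3) : ℝ := Real.sqrt (1 + ‖v‖ ^ 2)

/-- Hypotheses on the domain: `𝒪 = {ξ > 0}` is bounded, `ξ` is smooth with nonvanishing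
gradient on the boundary, and `𝒪` is uniformly convex. -/
structure DomainHyp (ξ : E3 → ℝ) (θ : ℝ) : Prop where
  pos : 0 < θ
  smooth : ContDiff ℝ (⊤ : ℕ∞) ξ
  bounded : Bornology.IsBounded {x : E3 | 0 < ξ x}
  gradNe : ∀ x : E3, ξ x = 0 → gradient ξ x ≠ 0
  uconvex : ∀ x ζ : E3, θ * ‖ζ‖ ^ 2 ≤ -(iteratedFDeriv ℝ 2 ξ x ![ζ, ζ])

/-!
Along a line, `ξ` is strongly concave: `ξ (q + τ w) ≤ ξ q + Dξ(q) w τ - θ |w|² τ² / 2`. Along the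
billiard trajectory this yields a time `σ` with `ξ (X s) ≤ -θ |v|² (s - σ)² / 2`: with a bounce,
`x_b ∈ ∂Ω` and both pieces leave `x_b` with nonincreasing `ξ`, because the reflection flips the sign
of `∇ξ · v`; without a bounce, `σ` is the vertex of the parabola. As `∂Ω` is compact and `ξ` is
Lipschitz near it, `-ξ y ≲ d(y, ∂Ω)` when `d < 1`, hence
`ln (1 + 1 / d(X s, ∂Ω)) ≲ ln (1 + 1 / |v|) + |s - σ|^(-1/2)`, and against `e^{-ϖ⟨v⟩²(t-s)}` the
singular weight integrates to `O((ϖ ⟨v⟩²)^(-1/2))`. Slow particles, `|v| ≤ ε / 2`, stay at distance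
`ε / 2` from the boundary up to time `1`.
-/

open Filter

theorem le_add_mul_sub_sq_of_deriv2_le {g g' g'' : ℝ → ℝ} {c : ℝ}
    (hg : ∀ τ, HasDerivAt g (g' τ) τ) (hg' : ∀ τ, HasDerivAt g' (g'' τ) τ)
    (hc : ∀ τ, g'' τ ≤ -c) (σ s : ℝ) :
    g s ≤ g σ + g' σ * (s - σ) - c / 2 * (s - σ) ^ 2 := by
  -- `g + c τ² / 2` is concave, hence lies below its tangent line at `σ`.
  set h : ℝ → ℝ := fun τ => g τ + c / 2 * τ ^ 2
  have hh : ∀ τ, HasDerivAt h (g' τ + c * τ) τ := fun τ =>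
    ((hg τ).fun_add ((hasDerivAt_pow 2 τ).const_mul (c / 2))).congr_deriv (by simp; ring)
  have hh' : ∀ τ, HasDerivAt (fun τ => g' τ + c * τ) (g'' τ + c) τ := fun τ => by
    simpa using (hg' τ).fun_add ((hasDerivAt_id' τ).const_mul c)
  have hconc : ConcaveOn ℝ univ h :=
    concaveOn_of_hasDerivWithinAt2_nonpos convex_univ
      (fun τ _ => (hh τ).continuousAt.continuousWithinAt)
      (fun τ _ => (hh τ).hasDerivWithinAt) (fun τ _ => (hh' τ).hasDerivWithinAt)
      (fun τ _ => by linarith [hc τ])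
  have tangent : h s ≤ h σ + (g' σ + c * σ) * (s - σ) := by
    rcases lt_trichotomy σ s with hlt | rfl | hlt
    · have := hconc.slope_le_of_hasDerivAt trivial trivial hlt (hh σ)
      rw [slope_def_field, div_le_iff₀ (sub_pos.2 hlt)] at this
      linarith
    · simp
    · have := hconc.le_slope_of_hasDerivAt trivial trivial hlt (hh σ)
      rw [slope_def_field, le_div_iff₀ (sub_pos.2 hlt)] at this
      linarith
  simp only [h] at tangent
  linarith

theorem exists_forall_le_neg_sq_of_deriv2_le {g g' g'' : ℝ → ℝ} {c : ℝ}
    (hg : ∀ τ, HasDerivAt g (g' τ) τ) (hg' : ∀ τ, HasDerivAt g' (g'' τ) τ)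
    (hc : ∀ τ, g'' τ ≤ -c) (hc0 : 0 < c) {t : ℝ} (hneg : ∀ s ≤ t, g s ≤ 0) :
    ∃ σ, ∀ s ≤ t, g s ≤ -(c / 2 * (s - σ) ^ 2) := by
  have tangent := le_add_mul_sub_sq_of_deriv2_le hg hg' hc
  -- the vertex: `σ = t` if `g` still increases at `t`, otherwise the zero of `g'` before `t`
  obtain ⟨σ, hσt, hσ⟩ : ∃ σ ≤ t, 0 ≤ g' σ ∧ (σ = t ∨ g' σ = 0) := by
    by_cases ht : 0 ≤ g' t
    · exact ⟨t, le_rfl, ht, Or.inl rfl⟩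
    rw [not_le] at ht
    set s₀ := t + g' t / c
    have hs₀ : s₀ ≤ t := by
      have : g' t / c < 0 := div_neg_of_neg_of_pos ht hc0
      linarith
    have hg's₀ : 0 ≤ g' s₀ := by
      have := image_sub_le_mul_sub_of_deriv_le (fun τ => (hg' τ).differentiableAt)
        (fun τ => (hg' τ).deriv ▸ hc τ) hs₀
      have : c * (t - s₀) = -g' t := by simp only [s₀]; field_simp; ring
      linarith
    obtain ⟨σ, hσ, hσ0⟩ := intermediate_value_Icc' hs₀
      (fun τ _ => (hg' τ).continuousAt.continuousWithinAt) ⟨ht.le, hg's₀⟩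
    exact ⟨σ, hσ.2, hσ0.ge, Or.inr hσ0⟩
  refine ⟨σ, fun s hs => ?_⟩
  have hlin : g' σ * (s - σ) ≤ 0 := by
    rcases hσ.2 with rfl | h0
    · exact mul_nonpos_of_nonneg_of_nonpos hσ.1 (by linarith)
    · simp [h0]
  linarith [tangent σ s, hneg σ hσt]

theorem HasDerivAt.nonpos_of_forall_Ioc_le {f : ℝ → ℝ} {f' a b : ℝ} (hf : HasDerivAt f f' a)
    (hab : a < b) (hle : ∀ s ∈ Ioc a b, f s ≤ f a) : f' ≤ 0 := by
  have hmax : IsLocalMaxOn f (Ici a) a := by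
    filter_upwards [Icc_mem_nhdsGE hab] with s hs
    rcases hs.1.eq_or_lt with rfl | h
    · exact le_rfl
    · exact hle s ⟨h, hs.2⟩
  have h1 : (1 : ℝ) ∈ posTangentConeAt (Ici a) a :=
    mem_posTangentConeAt_of_segment_subset (by simp [segment_eq_Icc, Icc_subset_Ici_self])
  simpa using hmax.hasFDerivWithinAt_nonpos hf.hasFDerivAt.hasFDerivWithinAt h1

section Lines

variable {E : Type*} [NormedAddCommGroup E] [NormedSpace ℝ E]

theorem hasDerivAt_comp_line {F : Type*} [NormedAddCommGroup F] [NormedSpace ℝ F] {f : E → F}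
    {p w : E} {τ : ℝ} (hf : DifferentiableAt ℝ f (p + τ • w)) :
    HasDerivAt (fun s : ℝ => f (p + s • w)) (fderiv ℝ f (p + τ • w) w) τ := by
  have hline : HasDerivAt (fun s : ℝ => p + s • w) w τ := by
    simpa using ((hasDerivAt_id τ).smul_const w).const_add p
  exact hf.hasFDerivAt.comp_hasDerivAt τ hline

theorem hasDerivAt_fderiv_comp_line {f : E → ℝ} (hf : ContDiff ℝ 2 f) (p w : E) (τ : ℝ) :
    HasDerivAt (fun s : ℝ => fderiv ℝ f (p + s • w) w)
      (fderiv ℝ (fderiv ℝ f) (p + τ • w) w w) τ := by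
  have hf' : Differentiable ℝ (fderiv ℝ f) :=
    (hf.fderiv_right (m := 1) (by norm_num)).differentiable one_ne_zero
  simpa using (hasDerivAt_comp_line (hf' _)).clm_apply (hasDerivAt_const τ w)

theorem fderiv_fderiv_apply_le {f : E → ℝ} {θ : ℝ}
    (huc : ∀ x ζ : E, θ * ‖ζ‖ ^ 2 ≤ -(iteratedFDeriv ℝ 2 f x ![ζ, ζ])) (x w : E) :
    fderiv ℝ (fderiv ℝ f) x w w ≤ -(θ * ‖w‖ ^ 2) := by
  have h := huc x w
  rw [iteratedFDeriv_two_apply] at h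
  simp only [Matrix.cons_val_zero, Matrix.cons_val_one] at h
  linarith

theorem le_add_fderiv_mul_sub_sq {f : E → ℝ} {θ : ℝ} (hf : ContDiff ℝ 2 f)
    (huc : ∀ x ζ : E, θ * ‖ζ‖ ^ 2 ≤ -(iteratedFDeriv ℝ 2 f x ![ζ, ζ])) (q w : E) (τ : ℝ) :
    f (q + τ • w) ≤ f q + fderiv ℝ f q w * τ - θ * ‖w‖ ^ 2 / 2 * τ ^ 2 := by
  simpa using le_add_mul_sub_sq_of_deriv2_le
    (fun s => hasDerivAt_comp_line (hf.differentiable two_ne_zero _))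
    (hasDerivAt_fderiv_comp_line hf q w) (fun s => fderiv_fderiv_apply_le huc _ w) 0 τ

theorem isBounded_setOf_nonneg {f : E → ℝ} {θ : ℝ} (hf : ContDiff ℝ 2 f) (hθ : 0 < θ)
    (huc : ∀ x ζ : E, θ * ‖ζ‖ ^ 2 ≤ -(iteratedFDeriv ℝ 2 f x ![ζ, ζ])) :
    Bornology.IsBounded {x | 0 ≤ f x} := by
  set A := ‖fderiv ℝ f 0‖
  refine isBounded_iff_forall_norm_le.2 ⟨1 + 2 * (A + |f 0|) / θ, fun y hy => ?_⟩
  have hquad := le_add_fderiv_mul_sub_sq hf huc 0 y 1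
  simp only [zero_add, one_smul, mul_one, one_pow] at hquad
  have hlin : fderiv ℝ f 0 y ≤ A * ‖y‖ :=
    (le_abs_self _).trans ((fderiv ℝ f 0).le_opNorm y)
  have hy : (0 : ℝ) ≤ f y := hy
  by_contra! hlt
  have hr1 : 1 ≤ ‖y‖ := by linarith [show 0 ≤ 2 * (A + |f 0|) / θ by positivity]
  have hr : 2 * (A + |f 0|) < ‖y‖ * θ := (div_lt_iff₀ hθ).1 (by linarith)
  nlinarith [le_abs_self (f 0), mul_le_mul_of_nonneg_left hr1 (abs_nonneg (f 0)),
    mul_lt_mul_of_pos_left hr (by linarith : (0 : ℝ) < ‖y‖)]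

end Lines

theorem Real.log_one_add_mul_le {a b : ℝ} (ha : 0 ≤ a) (hb : 0 ≤ b) :
    Real.log (1 + a * b) ≤ Real.log (1 + a) + Real.log (1 + b) := by
  rw [← Real.log_mul (by positivity) (by positivity)]
  exact Real.log_le_log (by positivity) (by nlinarith)

theorem Real.log_one_add_pow_le {z : ℝ} (hz : 0 ≤ z) {n : ℕ} (hn : n ≠ 0) :
    Real.log (1 + z ^ n) ≤ n * Real.log (1 + z) := by
  rw [← Real.log_pow]
  exact Real.log_le_log (by positivity) (by simpa using pow_add_pow_le zero_le_one hz hn)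

theorem Real.log_one_add_inv_sq_le (u : ℝ) :
    Real.log (1 + 1 / u ^ 2) ≤ 4 * |u| ^ (-(1 / 2) : ℝ) := by
  set w := |u| ^ (-(1 / 2) : ℝ)
  have hw : 0 ≤ w := Real.rpow_nonneg (abs_nonneg u) _
  have hw4 : w ^ 4 = 1 / u ^ 2 := by
    rw [← Real.rpow_natCast, ← Real.rpow_mul (abs_nonneg u), ← sq_abs, one_div (|u| ^ 2),
      ← Real.rpow_natCast, ← Real.rpow_neg (abs_nonneg u)]
    norm_num
  calc Real.log (1 + 1 / u ^ 2) = Real.log (1 + w ^ 4) := by rw [hw4]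
    _ ≤ 4 * Real.log (1 + w) := by exact_mod_cast Real.log_one_add_pow_le hw four_ne_zero
    _ ≤ 4 * w := by
      gcongr
      linarith [Real.log_le_sub_one_of_pos (by positivity : 0 < 1 + w)]

section DistanceToZeroSet

variable {α : Type*} [PseudoMetricSpace α]

theorem exists_abs_le_mul_dist_of_locallyLipschitz [ProperSpace α] {f : α → ℝ}
    (hf : LocallyLipschitz f) {K : Set α} (hK : IsCompact K) (hfK : ∀ z ∈ K, f z = 0) :
    ∃ L : NNReal, ∀ z ∈ K, ∀ y, dist y z ≤ 1 → |f y| ≤ L * dist y z := by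
  obtain ⟨L, hL⟩ := hf.locallyLipschitzOn.exists_lipschitzOnWith_of_compact
    (hK.cthickening (r := 1))
  refine ⟨L, fun z hz y hy => ?_⟩
  have := hL.dist_le_mul y (Metric.closedBall_subset_cthickening hz 1 hy) z
    (Metric.self_subset_cthickening K hz)
  rwa [hfK z hz, Real.dist_eq, sub_zero] at this

theorem log_one_add_inv_infDist_le {f : α → ℝ} {K : Set α} {L m : ℝ} {y : α}
    (hK : IsCompact K) (hne : K.Nonempty) (hL : 0 ≤ L)
    (hfK : ∀ z ∈ K, ∀ y, dist y z ≤ 1 → |f y| ≤ L * dist y z) (hm : 0 < m) (hy : m ≤ -f y) :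
    Real.log (1 + 1 / Metric.infDist y K) ≤ Real.log 2 + Real.log (1 + L / m) := by
  have hLm : 0 ≤ L / m := div_nonneg hL hm.le
  have hinv : 1 / Metric.infDist y K ≤ 1 + L / m := by
    obtain ⟨z, hz, hdist⟩ := hK.exists_infDist_eq_dist hne y
    rcases le_or_gt 1 (Metric.infDist y K) with hd | hd
    · linarith [(div_le_one (by linarith)).2 hd]
    · have hLd : m ≤ L * Metric.infDist y K :=
        hy.trans ((neg_le_abs _).trans (hdist ▸ hfK z hz y (hdist ▸ hd.le)))
      have hd0 : 0 < Metric.infDist y K := pos_of_mul_pos_right (hm.trans_le hLd) hL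
      have : 1 / Metric.infDist y K ≤ L / m := by
        rw [div_le_div_iff₀ hd0 hm]; linarith
      linarith
  rw [← Real.log_mul two_ne_zero (by linarith)]
  exact Real.log_le_log (add_pos_of_pos_of_nonneg one_pos (one_div_nonneg.2 Metric.infDist_nonneg))
    (by linarith)

end DistanceToZeroSet

section SingularWeight

theorem Real.rpow_eq_zero_of_neg_of_cos_eq_zero {x y : ℝ} (hx : x < 0)
    (hy : Real.cos (y * Real.pi) = 0) : x ^ y = 0 := by
  rw [Real.rpow_def_of_neg hx, hy, mul_zero]

/- Mathlib's `x ^ y` for `x < 0` is `|x| ^ y * cos (y * π)`, which vanishes for `y = ±1/2`,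
so each summand below carries one half-line. -/
theorem abs_rpow_neg_half (x : ℝ) :
    |x| ^ (-(1 / 2) : ℝ) = x ^ (-(1 / 2) : ℝ) + (-x) ^ (-(1 / 2) : ℝ) := by
  have hcos : Real.cos (-(1 / 2) * Real.pi) = 0 := by
    rw [neg_mul, Real.cos_neg, one_div_mul_eq_div, Real.cos_pi_div_two]
  rcases lt_trichotomy x 0 with hx | rfl | hx
  · rw [abs_of_neg hx, Real.rpow_eq_zero_of_neg_of_cos_eq_zero hx hcos, zero_add]
  · simp [Real.zero_rpow]
  · rw [abs_of_pos hx, Real.rpow_eq_zero_of_neg_of_cos_eq_zero (neg_neg_of_pos hx) hcos, add_zero]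

theorem intervalIntegrable_abs_sub_rpow_neg_half (σ a b : ℝ) :
    IntervalIntegrable (fun s => |s - σ| ^ (-(1 / 2) : ℝ)) volume a b := by
  have h : ∀ a b : ℝ, IntervalIntegrable (fun x : ℝ => x ^ (-(1 / 2) : ℝ)) volume a b :=
    fun _ _ => intervalIntegral.intervalIntegrable_rpow' (by norm_num)
  simp_rw [abs_rpow_neg_half, neg_sub]
  refine IntervalIntegrable.add ?_ ?_
  · simpa using (h (a - σ) (b - σ)).comp_sub_right σ
  · simpa using (h (σ - a) (σ - b)).comp_sub_left σ

theorem integral_abs_sub_rpow_neg_half (σ : ℝ) {r : ℝ} (hr : 0 ≤ r) :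
    ∫ s in σ - r..σ + r, |s - σ| ^ (-(1 / 2) : ℝ) = 4 * √r := by
  have h : IntervalIntegrable (fun x : ℝ => x ^ (-(1 / 2) : ℝ)) volume (-r) r :=
    intervalIntegral.intervalIntegrable_rpow' (by norm_num)
  have hneg : (-r) ^ (1 / 2 : ℝ) = 0 := by
    rcases hr.eq_or_lt with rfl | hr
    · simp
    · exact Real.rpow_eq_zero_of_neg_of_cos_eq_zero (neg_neg_of_pos hr)
        (by rw [one_div_mul_eq_div, Real.cos_pi_div_two])
  rw [intervalIntegral.integral_comp_sub_right (fun x => |x| ^ (-(1 / 2) : ℝ)),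
    sub_sub_cancel_left, add_sub_cancel_left]
  simp_rw [abs_rpow_neg_half]
  rw [intervalIntegral.integral_add h (by simpa using h.symm.comp_sub_left 0),
    intervalIntegral.integral_comp_neg (fun x => x ^ (-(1 / 2) : ℝ)), neg_neg,
    integral_rpow (Or.inl (by norm_num))]
  norm_num [hneg, Real.sqrt_eq_rpow]
  ring

end SingularWeight

section ExponentialWeight

theorem integral_exp_neg_mul_sub_le {a : ℝ} (ha : 0 < a) (t : ℝ) :
    ∫ s in 0..t, Real.exp (-(a * (t - s))) ≤ 1 / a := by
  have hF : ∀ s, HasDerivAt (fun s => Real.exp (-(a * (t - s))) / a)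
      (Real.exp (-(a * (t - s)))) s := fun s =>
    ((((hasDerivAt_id' s).const_sub t).const_mul a).fun_neg.exp.div_const a).congr_deriv
      (by field_simp)
  rw [intervalIntegral.integral_eq_sub_of_hasDerivAt (fun s _ => hF s)
    (Continuous.intervalIntegrable (by fun_prop) _ _)]
  simp only [sub_self, mul_zero, neg_zero, Real.exp_zero]
  linarith [div_pos (Real.exp_pos (-(a * (t - 0)))) ha]

theorem abs_sub_rpow_neg_half_le_sqrt_add_indicator {a : ℝ} (ha : 0 < a) (σ s : ℝ) :
    |s - σ| ^ (-(1 / 2) : ℝ) ≤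
      √a + (Ioo (σ - 1 / a) (σ + 1 / a)).indicator (fun s => |s - σ| ^ (-(1 / 2) : ℝ)) s := by
  by_cases hs : s ∈ Ioo (σ - 1 / a) (σ + 1 / a)
  · rw [indicator_of_mem hs]
    linarith [Real.sqrt_nonneg a]
  rw [indicator_of_notMem hs, add_zero]
  have hfar : 1 / a ≤ |s - σ| := by
    simp only [mem_Ioo, not_and_or, not_lt] at hs
    rcases hs with hs | hs
    · rw [abs_of_nonpos (by linarith [one_div_pos.2 ha])]; linarith
    · rw [abs_of_nonneg (by linarith [one_div_pos.2 ha])]; linarith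
  calc |s - σ| ^ (-(1 / 2) : ℝ) ≤ (1 / a) ^ (-(1 / 2) : ℝ) :=
        Real.rpow_le_rpow_of_nonpos (one_div_pos.2 ha) hfar (by norm_num)
    _ = √a := by
        rw [one_div, Real.inv_rpow ha.le, ← Real.rpow_neg ha.le, neg_neg, Real.sqrt_eq_rpow]

theorem integrable_indicator_abs_sub_rpow_neg_half (σ r : ℝ) :
    Integrable ((Ioo (σ - r) (σ + r)).indicator fun s => |s - σ| ^ (-(1 / 2) : ℝ)) := by
  rw [integrable_indicator_iff measurableSet_Ioo]
  exact (intervalIntegrable_abs_sub_rpow_neg_half σ (σ - r) (σ + r)).1.mono_set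
    Ioo_subset_Ioc_self

theorem integral_indicator_abs_sub_rpow_neg_half_le (σ : ℝ) {r t : ℝ} (hr : 0 ≤ r)
    (ht : 0 ≤ t) :
    ∫ s in 0..t, (Ioo (σ - r) (σ + r)).indicator (fun s => |s - σ| ^ (-(1 / 2) : ℝ)) s ≤
      4 * √r := by
  have hint := integrable_indicator_abs_sub_rpow_neg_half σ r
  calc _ = ∫ s in Ioc 0 t, (Ioo (σ - r) (σ + r)).indicator (fun s => |s - σ| ^ (-(1 / 2) : ℝ)) s :=
        intervalIntegral.integral_of_le ht
    _ ≤ ∫ s, (Ioo (σ - r) (σ + r)).indicator (fun s => |s - σ| ^ (-(1 / 2) : ℝ)) s :=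
        setIntegral_le_integral hint (Eventually.of_forall
          (indicator_nonneg fun s _ => Real.rpow_nonneg (abs_nonneg _) _))
    _ = ∫ s in σ - r..σ + r, |s - σ| ^ (-(1 / 2) : ℝ) := by
        rw [integral_indicator measurableSet_Ioo, intervalIntegral.integral_of_le (by linarith),
          integral_Ioc_eq_integral_Ioo]
    _ = 4 * √r := integral_abs_sub_rpow_neg_half σ hr

theorem integral_exp_mul_abs_sub_rpow_neg_half_le {a t : ℝ} (ha : 0 < a) (ht : 0 ≤ t) (σ : ℝ) :
    ∫ s in 0..t, Real.exp (-(a * (t - s))) * |s - σ| ^ (-(1 / 2) : ℝ) ≤ 5 / √a := by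
  set E : ℝ → ℝ := fun s => Real.exp (-(a * (t - s)))
  set near := (Ioo (σ - 1 / a) (σ + 1 / a)).indicator fun s => |s - σ| ^ (-(1 / 2) : ℝ)
  have hEcont : Continuous E := by fun_prop
  have hnear := integrable_indicator_abs_sub_rpow_neg_half σ (1 / a)
  calc ∫ s in 0..t, E s * |s - σ| ^ (-(1 / 2) : ℝ) ≤ ∫ s in 0..t, (√a * E s + near s) := by
        refine intervalIntegral.integral_mono_on ht
          ((intervalIntegrable_abs_sub_rpow_neg_half σ 0 t).continuousOn_mul hEcont.continuousOn)
          ((hEcont.intervalIntegrable 0 t).const_mul _ |>.add hnear.intervalIntegrable)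
          fun s hs => ?_
        have hE1 : E s ≤ 1 := Real.exp_le_one_iff.2 (by nlinarith [hs.2])
        have hE0 : 0 ≤ E s := (Real.exp_pos _).le
        have hnear0 : 0 ≤ near s :=
          indicator_nonneg (fun s _ => Real.rpow_nonneg (abs_nonneg _) _) s
        have hw := abs_sub_rpow_neg_half_le_sqrt_add_indicator ha σ s
        nlinarith [mul_le_mul_of_nonneg_left hw hE0]
    _ = √a * (∫ s in 0..t, E s) + ∫ s in 0..t, near s := by
        rw [intervalIntegral.integral_add ((hEcont.intervalIntegrable 0 t).const_mul _)
          hnear.intervalIntegrable, intervalIntegral.integral_const_mul]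
    _ ≤ √a * (1 / a) + 4 * √(1 / a) :=
        add_le_add (mul_le_mul_of_nonneg_left (integral_exp_neg_mul_sub_le ha t)
          (Real.sqrt_nonneg a)) (integral_indicator_abs_sub_rpow_neg_half_le σ (by positivity) ht)
    _ = 5 / √a := by
        rw [Real.sqrt_div zero_le_one, Real.sqrt_one,
          show √a * (1 / a) = 1 / √a by field_simp; rw [Real.sq_sqrt ha.le]]
        ring

theorem integral_exp_mul_le_of_le_add_abs_sub_rpow {a t K σ : ℝ} {f : ℝ → ℝ} (ha : 1 ≤ a)
    (ht : 0 ≤ t) (hK : 0 ≤ K)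
    (hf : ∀ s ∈ Icc 0 t, s ≠ σ → f s ≤ K + 4 * |s - σ| ^ (-(1 / 2) : ℝ)) :
    ∫ s in 0..t, Real.exp (-(a * (t - s))) * f s ≤ (K + 20) / √a := by
  have ha0 : 0 < a := by linarith
  have hsa : 0 < √a := Real.sqrt_pos.2 ha0
  by_cases hint : IntervalIntegrable (fun s => Real.exp (-(a * (t - s))) * f s) volume 0 t
  swap
  · rw [intervalIntegral.integral_undef hint]
    positivity
  set E : ℝ → ℝ := fun s => Real.exp (-(a * (t - s)))
  have hEcont : Continuous E := by fun_prop
  have hEw : IntervalIntegrable (fun s => E s * |s - σ| ^ (-(1 / 2) : ℝ)) volume 0 t :=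
    (intervalIntegrable_abs_sub_rpow_neg_half σ 0 t).continuousOn_mul hEcont.continuousOn
  have hinv : 1 / a ≤ 1 / √a :=
    one_div_le_one_div_of_le hsa (by nlinarith [Real.sq_sqrt ha0.le, Real.one_le_sqrt.2 ha])
  calc ∫ s in 0..t, E s * f s
      ≤ ∫ s in 0..t, (K * E s + 4 * (E s * |s - σ| ^ (-(1 / 2) : ℝ))) := by
        refine intervalIntegral.integral_mono_ae_restrict ht hint
          (((hEcont.intervalIntegrable 0 t).const_mul K).add (hEw.const_mul 4)) ?_
        filter_upwards [ae_restrict_mem measurableSet_Icc,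
          ae_restrict_of_ae ((countable_singleton σ).ae_notMem volume)] with s hs hσ
        have := mul_le_mul_of_nonneg_left (hf s hs hσ) (Real.exp_pos (-(a * (t - s)))).le
        simp only [E]
        linarith
    _ = K * (∫ s in 0..t, E s) + 4 * ∫ s in 0..t, E s * |s - σ| ^ (-(1 / 2) : ℝ) := by
        rw [intervalIntegral.integral_add ((hEcont.intervalIntegrable 0 t).const_mul K)
          (hEw.const_mul 4), intervalIntegral.integral_const_mul,
          intervalIntegral.integral_const_mul]
    _ ≤ K * (1 / √a) + 4 * (5 / √a) := by
        gcongr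
        · exact (integral_exp_neg_mul_sub_le ha0 t).trans hinv
        · exact integral_exp_mul_abs_sub_rpow_neg_half_le ha0 ht σ
    _ = (K + 20) / √a := by ring

end ExponentialWeight

section Billiard

theorem fderiv_specR (ξ : E3 → ℝ) (y w : E3) :
    fderiv ℝ ξ y (specR ξ y w) = -fderiv ℝ ξ y w := by
  have key : ∀ u, fderiv ℝ ξ y u = ⟪gradient ξ y, u⟫ := fun u => by
    rw [gradient, InnerProductSpace.toDual_symm_apply]
  simp only [key, specR, nvec, inner_sub_right, real_inner_smul_right, real_inner_smul_left,
    real_inner_self_eq_norm_sq]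
  rcases eq_or_ne (gradient ξ y) 0 with h | h
  · simp [h]
  · have : ‖gradient ξ y‖ ≠ 0 := norm_ne_zero_iff.2 h
    field_simp
    ring

theorem norm_specR (ξ : E3 → ℝ) (y w : E3) : ‖specR ξ y w‖ = ‖w‖ := by
  rcases eq_or_ne (gradient ξ y) 0 with h | h
  · simp [specR, nvec, h]
  · have hn : ‖nvec ξ y‖ = 1 := by
      rw [nvec, norm_smul, norm_inv, norm_norm, inv_mul_cancel₀ (norm_ne_zero_iff.2 h)]
    rw [← sq_eq_sq₀ (norm_nonneg _) (norm_nonneg _), specR, norm_sub_sq_real, norm_smul,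
      real_inner_smul_right, mul_pow, hn, Real.norm_eq_abs, sq_abs, real_inner_comm]
    ring

def tbSet (ξ : E3 → ℝ) (x v : E3) : Set ℝ :=
  {s : ℝ | 0 ≤ s ∧ ∀ τ ∈ Ioo (0 : ℝ) s, x - τ • v ∈ domOmega ξ}

variable {ξ : E3 → ℝ} {x v : E3}

theorem tb_eq_sSup_tbSet : tb ξ x v = sSup (tbSet ξ x v) := rfl

theorem zero_mem_tbSet : (0 : ℝ) ∈ tbSet ξ x v :=
  ⟨le_rfl, fun _ hτ => (hτ.1.not_gt hτ.2).elim⟩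

theorem tb_nonneg : 0 ≤ tb ξ x v := Real.sSup_nonneg fun _ hs => hs.1

theorem xi_sub_smul_neg_of_mem_Ico (hx : x ∈ domOmega ξ) {τ : ℝ} (hτ : τ ∈ Ico 0 (tb ξ x v)) :
    ξ (x - τ • v) < 0 := by
  rcases hτ.1.eq_or_lt with rfl | hτ0
  · simpa using show ξ x < 0 from hx
  obtain ⟨s, hs, hτs⟩ := exists_lt_of_lt_csSup ⟨0, zero_mem_tbSet⟩ (tb_eq_sSup_tbSet ▸ hτ.2)
  exact hs.2 τ ⟨hτ0, hτs⟩

theorem xi_xbpos_eq_zero (hξ : Continuous ξ) (hx : x ∈ domOmega ξ) (hits : HitsBdry ξ x v) :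
    ξ (xbpos ξ x v) = 0 := by
  have hline : Continuous fun τ : ℝ => ξ (x - τ • v) := by fun_prop
  have hx' : ξ (x - (0 : ℝ) • v) < 0 := by simpa using show ξ x < 0 from hx
  apply le_antisymm
  · by_contra! hpos
    obtain ⟨τ, hτ, hτ0⟩ := intermediate_value_Icc tb_nonneg hline.continuousOn ⟨hx'.le, hpos.le⟩
    have hτtb : τ ≠ tb ξ x v := by rintro rfl; exact hpos.ne' hτ0
    exact (xi_sub_smul_neg_of_mem_Ico hx ⟨hτ.1, hτ.2.lt_of_ne hτtb⟩).ne hτ0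
  · -- if `ξ < 0` at the exit point, the backward ray would stay in `Ω` a little longer
    by_contra! hneg
    obtain ⟨τ₀, hτ₀, hout⟩ := hits
    have hbdd : BddAbove (tbSet ξ x v) :=
      ⟨τ₀, fun s hs => not_lt.1 fun h => hout (hs.2 τ₀ ⟨hτ₀, h⟩)⟩
    obtain ⟨b, hb, hsub⟩ := exists_Ico_subset_of_mem_nhds
      (hline.continuousAt.preimage_mem_nhds (Iio_mem_nhds hneg)) (exists_gt (tb ξ x v))
    have hmem : b ∈ tbSet ξ x v := by
      refine ⟨tb_nonneg.trans hb.le, fun τ hτ => ?_⟩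
      rcases lt_or_ge τ (tb ξ x v) with h | h
      · exact xi_sub_smul_neg_of_mem_Ico hx ⟨hτ.1.le, h⟩
      · exact hsub ⟨h, hτ.2⟩
    exact (le_csSup hbdd hmem).not_gt hb

theorem tb_pos (hξ : Continuous ξ) (hx : x ∈ domOmega ξ) (hits : HitsBdry ξ x v) :
    0 < tb ξ x v := by
  refine tb_nonneg.lt_of_ne fun h => ?_
  have := xi_xbpos_eq_zero hξ hx hits
  rw [xbpos, ← h, zero_smul, sub_zero] at this
  exact (show ξ x < 0 from hx).ne this

theorem fderiv_xbpos_nonpos (hξ : Differentiable ℝ ξ) (hx : x ∈ domOmega ξ)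
    (hits : HitsBdry ξ x v) : fderiv ℝ ξ (xbpos ξ x v) v ≤ 0 := by
  have hderiv := hasDerivAt_comp_line (p := xbpos ξ x v) (w := v) (τ := 0) (hξ _)
  rw [zero_smul, add_zero] at hderiv
  refine hderiv.nonpos_of_forall_Ioc_le (tb_pos hξ.continuous hx hits) fun τ hτ => ?_
  have : xbpos ξ x v + τ • v = x - (tb ξ x v - τ) • v := by rw [xbpos]; module
  rw [this, zero_smul, add_zero, xi_xbpos_eq_zero hξ.continuous hx hits]
  exact (xi_sub_smul_neg_of_mem_Ico hx ⟨by linarith [hτ.2], by linarith [hτ.1]⟩).le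

theorem dist_Xtr_le {s t : ℝ} (hst : s ≤ t) : dist (Xtr ξ s t x v) x ≤ (t - s) * ‖v‖ := by
  rw [dist_eq_norm, Xtr]
  split_ifs with h
  · calc ‖xbpos ξ x v - (t - tb ξ x v - s) • specR ξ (xbpos ξ x v) v - x‖
        = ‖-(tb ξ x v • v) - (t - tb ξ x v - s) • specR ξ (xbpos ξ x v) v‖ := by
          rw [xbpos]; congr 1; abel
      _ ≤ tb ξ x v * ‖v‖ + (t - tb ξ x v - s) * ‖v‖ := by
          refine (norm_sub_le _ _).trans ?_
          rw [norm_neg, norm_smul, norm_smul, norm_specR, Real.norm_of_nonneg tb_nonneg,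
            Real.norm_of_nonneg (by linarith [h.2])]
      _ = (t - s) * ‖v‖ := by ring
  · rw [sub_sub_cancel_left, norm_neg, norm_smul, Real.norm_of_nonneg (by linarith)]

section Concavity

variable {θ : ℝ}

theorem sq_le_neg_xi_Xtr_of_hitsBdry (hξ : ContDiff ℝ 2 ξ)
    (huc : ∀ x ζ : E3, θ * ‖ζ‖ ^ 2 ≤ -(iteratedFDeriv ℝ 2 ξ x ![ζ, ζ]))
    (hx : x ∈ domOmega ξ) (hits : HitsBdry ξ x v) (s t : ℝ) :
    θ * ‖v‖ ^ 2 / 2 * (s - (t - tb ξ x v)) ^ 2 ≤ -ξ (Xtr ξ s t x v) := by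
  have h0 := xi_xbpos_eq_zero hξ.continuous hx hits
  have hd := fderiv_xbpos_nonpos (hξ.differentiable two_ne_zero) hx hits
  set σ := t - tb ξ x v
  by_cases hs : s ≤ σ
  · have hX : Xtr ξ s t x v = xbpos ξ x v + (s - σ) • specR ξ (xbpos ξ x v) v := by
      rw [Xtr, if_pos ⟨hits, hs⟩]
      module
    have := le_add_fderiv_mul_sub_sq hξ huc (xbpos ξ x v) (specR ξ (xbpos ξ x v) v) (s - σ)
    rw [fderiv_specR, norm_specR, h0, ← hX] at this
    nlinarith [mul_nonneg_of_nonpos_of_nonpos hd (sub_nonpos.2 hs)]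
  · have hX : Xtr ξ s t x v = xbpos ξ x v + (s - σ) • v := by
      rw [Xtr, if_neg (fun h => hs h.2), xbpos]
      module
    have := le_add_fderiv_mul_sub_sq hξ huc (xbpos ξ x v) v (s - σ)
    rw [h0, ← hX] at this
    nlinarith [mul_nonpos_of_nonpos_of_nonneg hd (sub_nonneg.2 (not_le.1 hs).le)]

theorem exists_sq_le_neg_xi_Xtr_of_not_hitsBdry (hθ : 0 < θ) (hξ : ContDiff ℝ 2 ξ)
    (huc : ∀ x ζ : E3, θ * ‖ζ‖ ^ 2 ≤ -(iteratedFDeriv ℝ 2 ξ x ![ζ, ζ]))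
    (hx : x ∈ domOmega ξ) (hits : ¬HitsBdry ξ x v) (hv : v ≠ 0) (t : ℝ) :
    ∃ σ, ∀ s ≤ t, θ * ‖v‖ ^ 2 / 2 * (s - σ) ^ 2 ≤ -ξ (Xtr ξ s t x v) := by
  have hX : ∀ s, Xtr ξ s t x v = (x - t • v) + s • v := fun s => by
    rw [Xtr, if_neg (fun h => hits h.1)]
    module
  have hneg : ∀ s ≤ t, ξ ((x - t • v) + s • v) ≤ 0 := by
    intro s hs
    rw [show (x - t • v) + s • v = x - (t - s) • v by module]
    rcases hs.eq_or_lt with rfl | hlt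
    · simpa using (show ξ x < 0 from hx).le
    · by_contra! h
      exact hits ⟨t - s, sub_pos.2 hlt, fun hmem => h.not_gt hmem⟩
  obtain ⟨σ, hσ⟩ := exists_forall_le_neg_sq_of_deriv2_le
    (fun τ => hasDerivAt_comp_line (hξ.differentiable two_ne_zero _))
    (hasDerivAt_fderiv_comp_line hξ _ v) (fun τ => fderiv_fderiv_apply_le huc _ v)
    (mul_pos hθ (pow_pos (norm_pos_iff.2 hv) 2)) hneg
  exact ⟨σ, fun s hs => by rw [hX]; linarith [hσ s hs]⟩

theorem exists_sq_le_neg_xi_Xtr (hθ : 0 < θ) (hξ : ContDiff ℝ 2 ξ)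
    (huc : ∀ x ζ : E3, θ * ‖ζ‖ ^ 2 ≤ -(iteratedFDeriv ℝ 2 ξ x ![ζ, ζ]))
    (hx : x ∈ domOmega ξ) (hv : v ≠ 0) (t : ℝ) :
    ∃ σ, ∀ s ≤ t, θ * ‖v‖ ^ 2 / 2 * (s - σ) ^ 2 ≤ -ξ (Xtr ξ s t x v) := by
  by_cases hits : HitsBdry ξ x v
  · exact ⟨_, fun s _ => sq_le_neg_xi_Xtr_of_hitsBdry hξ huc hx hits s t⟩
  · exact exists_sq_le_neg_xi_Xtr_of_not_hitsBdry hθ hξ huc hx hits hv t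

end Concavity

end Billiard

theorem isCompact_bdryOmega {ξ : E3 → ℝ} {θ : ℝ} (hξ : ContDiff ℝ 2 ξ) (hθ : 0 < θ)
    (huc : ∀ x ζ : E3, θ * ‖ζ‖ ^ 2 ≤ -(iteratedFDeriv ℝ 2 ξ x ![ζ, ζ])) :
    IsCompact (bdryOmega ξ) :=
  Metric.isCompact_of_isClosed_isBounded (isClosed_eq hξ.continuous continuous_const)
    ((isBounded_setOf_nonneg hξ hθ huc).subset fun y (hy : ξ y = 0) => hy.ge)

theorem log_one_add_inv_infDist_Xtr_le_of_norm_le {ξ : E3 → ℝ} {x v : E3} {ε s t : ℝ}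
    (hε : 0 < ε) (hxd : ε ≤ Metric.infDist x (bdryOmega ξ)) (hv : ‖v‖ ≤ ε / 2)
    (hs : s ∈ Icc 0 t) (ht : t ≤ 1) :
    Real.log (1 + 1 / Metric.infDist (Xtr ξ s t x v) (bdryOmega ξ)) ≤
      2 * Real.log (1 + 1 / ε) := by
  have hd : ε / 2 ≤ Metric.infDist (Xtr ξ s t x v) (bdryOmega ξ) := by
    have := Metric.infDist_le_infDist_add_dist (x := x) (y := Xtr ξ s t x v) (s := bdryOmega ξ)
    rw [dist_comm] at this
    nlinarith [dist_Xtr_le (ξ := ξ) (x := x) (v := v) hs.2, norm_nonneg v, hs.1]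
  have hinv : 1 / Metric.infDist (Xtr ξ s t x v) (bdryOmega ξ) ≤ 2 * (1 / ε) :=
    (one_div_le_one_div_of_le (by positivity) hd).trans_eq (by field_simp)
  calc Real.log (1 + 1 / Metric.infDist (Xtr ξ s t x v) (bdryOmega ξ))
      ≤ Real.log ((1 + 1 / ε) ^ 2) :=
        Real.log_le_log (add_pos_of_pos_of_nonneg one_pos (one_div_nonneg.2 (by linarith)))
          (by nlinarith [one_div_pos.2 hε])
    _ = 2 * Real.log (1 + 1 / ε) := by rw [Real.log_pow]; norm_num

theorem exists_log_one_add_inv_infDist_Xtr_le_of_ne_zero {ξ : E3 → ℝ} {θ L : ℝ} {x v : E3}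
    (hθ : 0 < θ) (hξ : ContDiff ℝ 2 ξ)
    (huc : ∀ x ζ : E3, θ * ‖ζ‖ ^ 2 ≤ -(iteratedFDeriv ℝ 2 ξ x ![ζ, ζ]))
    (hne : (bdryOmega ξ).Nonempty) (hL0 : 0 ≤ L)
    (hL : ∀ z ∈ bdryOmega ξ, ∀ y, dist y z ≤ 1 → |ξ y| ≤ L * dist y z)
    (hx : x ∈ domOmega ξ) (hv : v ≠ 0) (t : ℝ) :
    ∃ σ, ∀ s ≤ t, s ≠ σ →
      Real.log (1 + 1 / Metric.infDist (Xtr ξ s t x v) (bdryOmega ξ)) ≤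
        Real.log 2 + Real.log (1 + 2 * L / (θ * ‖v‖ ^ 2)) + 4 * |s - σ| ^ (-(1 / 2) : ℝ) := by
  obtain ⟨σ, hσ⟩ := exists_sq_le_neg_xi_Xtr hθ hξ huc hx hv t
  refine ⟨σ, fun s hs hsσ => ?_⟩
  have hθv : 0 < θ * ‖v‖ ^ 2 := mul_pos hθ (pow_pos (norm_pos_iff.2 hv) 2)
  have hm : 0 < θ * ‖v‖ ^ 2 / 2 * (s - σ) ^ 2 :=
    mul_pos (by positivity) (pow_pos (abs_pos.2 (sub_ne_zero.2 hsσ)) 2 |>.trans_eq (sq_abs _))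
  have hdist := log_one_add_inv_infDist_le (isCompact_bdryOmega hξ hθ huc) hne hL0 hL hm
    (hσ s hs)
  have htime : Real.log (1 + L / (θ * ‖v‖ ^ 2 / 2 * (s - σ) ^ 2)) ≤
      Real.log (1 + 2 * L / (θ * ‖v‖ ^ 2)) + 4 * |s - σ| ^ (-(1 / 2) : ℝ) := by
    rw [show L / (θ * ‖v‖ ^ 2 / 2 * (s - σ) ^ 2) = 2 * L / (θ * ‖v‖ ^ 2) * (1 / (s - σ) ^ 2) by
      field_simp]
    exact (Real.log_one_add_mul_le (div_nonneg (by positivity) hθv.le) (by positivity)).trans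
      (add_le_add_right (Real.log_one_add_inv_sq_le _) _)
  linarith

theorem log_one_add_div_sq_le {L θ ε r : ℝ} (hL : 0 ≤ L) (hθ : 0 < θ) (hε : 0 < ε)
    (hr : ε / 2 ≤ r) :
    Real.log (1 + 2 * L / (θ * r ^ 2)) ≤ Real.log (1 + 8 * L / θ) + 2 * Real.log (1 + 1 / ε) := by
  have hc : 0 ≤ 8 * L / θ := by positivity
  have hle : 2 * L / (θ * r ^ 2) ≤ 8 * L / θ * (1 / ε) ^ 2 :=
    calc 2 * L / (θ * r ^ 2) ≤ 2 * L / (θ * (ε / 2) ^ 2) :=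
          div_le_div_of_nonneg_left (by positivity) (by positivity) (by gcongr)
      _ = 8 * L / θ * (1 / ε) ^ 2 := by field_simp; ring
  calc Real.log (1 + 2 * L / (θ * r ^ 2)) ≤ Real.log (1 + 8 * L / θ * (1 / ε) ^ 2) :=
        Real.log_le_log (by positivity) (by linarith)
    _ ≤ Real.log (1 + 8 * L / θ) + Real.log (1 + (1 / ε) ^ 2) :=
        Real.log_one_add_mul_le hc (by positivity)
    _ ≤ Real.log (1 + 8 * L / θ) + 2 * Real.log (1 + 1 / ε) := by
        gcongr
        exact_mod_cast Real.log_one_add_pow_le (by positivity) two_ne_zero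

theorem exists_log_one_add_inv_infDist_Xtr_le {ξ : E3 → ℝ} {θ : ℝ} (hdom : DomainHyp ξ θ) :
    ∃ K₀ ≥ (0 : ℝ), ∀ ε : ℝ, 0 < ε → ε < 1 → ∀ t ≤ (1 : ℝ),
      ∀ x ∈ domOmega ξ, ε ≤ Metric.infDist x (bdryOmega ξ) → ∀ v : E3,
      ∃ σ, ∀ s ∈ Icc 0 t, s ≠ σ →
        Real.log (1 + 1 / Metric.infDist (Xtr ξ s t x v) (bdryOmega ξ)) ≤
          K₀ + 2 * Real.log (1 + 1 / ε) + 4 * |s - σ| ^ (-(1 / 2) : ℝ) := by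
  have hξ : ContDiff ℝ 2 ξ := hdom.smooth.of_le (WithTop.coe_le_coe.2 le_top)
  obtain ⟨L, hL⟩ := exists_abs_le_mul_dist_of_locallyLipschitz
    (hξ.of_le one_le_two).locallyLipschitz (isCompact_bdryOmega hξ hdom.pos hdom.uconvex)
    fun z hz => hz
  have hK₀ : 0 ≤ Real.log 2 + Real.log (1 + 8 * L / θ) :=
    add_nonneg (Real.log_nonneg one_le_two)
      (Real.log_nonneg (by linarith [div_nonneg (by positivity : (0 : ℝ) ≤ 8 * L) hdom.pos.le]))
  refine ⟨_, hK₀, fun ε hε0 hε1 t ht x hx hxd v => ?_⟩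
  have hw : ∀ σ s : ℝ, 0 ≤ |s - σ| ^ (-(1 / 2) : ℝ) := fun _ _ => Real.rpow_nonneg (abs_nonneg _) _
  rcases le_or_gt ‖v‖ (ε / 2) with hv | hv
  · refine ⟨0, fun s hs _ => ?_⟩
    linarith [log_one_add_inv_infDist_Xtr_le_of_norm_le hε0 hxd hv hs ht, hw 0 s]
  · have hne : (bdryOmega ξ).Nonempty := by
      by_contra h
      rw [not_nonempty_iff_eq_empty.1 h, Metric.infDist_empty] at hxd
      linarith
    obtain ⟨σ, hσ⟩ := exists_log_one_add_inv_infDist_Xtr_le_of_ne_zero hdom.pos hξ hdom.uconvex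
      hne L.coe_nonneg hL hx (norm_pos_iff.1 (by linarith)) t
    exact ⟨σ, fun s hs hsσ => by
      linarith [hσ s hs.2 hsσ, log_one_add_div_sq_le L.coe_nonneg hdom.pos hε0 hv.le]⟩

/-- **Lemma 5.8** (dynamical singular regime integration away from the boundary).
There is a constant `C` depending only on the domain such that for every `0 < ε < 1`,
`0 < t ≤ 1`, `x ∈ Ω` with `d(x,∂Ω) ≥ ε`, every `v` and every `ϖ > 1`,
`∫₀ᵗ e^{−ϖ⟨v⟩²(t−s)} ln(1 + 1/d(X(s;t,x,v),∂Ω)) ds ≤ (C/(√ϖ ⟨v⟩)) ln(1 + 1/ε)`. -/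
theorem dynamical_singular_regime_integration_away
    (ξ : E3 → ℝ) (θ : ℝ) (hdom : DomainHyp ξ θ) :
    ∃ C > (0 : ℝ), ∀ ε : ℝ, 0 < ε → ε < 1 → ∀ t : ℝ, 0 < t → t ≤ 1 →
      ∀ x ∈ domOmega ξ, ε ≤ Metric.infDist x (bdryOmega ξ) →
      ∀ v : E3, ∀ ϖ : ℝ, 1 < ϖ →
      (∫ s in (0 : ℝ)..t,
          Real.exp (-(ϖ * jap v ^ 2 * (t - s))) *
            Real.log (1 + 1 / Metric.infDist (Xtr ξ s t x v) (bdryOmega ξ)))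
        ≤ C / (Real.sqrt ϖ * jap v) * Real.log (1 + 1 / ε) := by
  obtain ⟨K₀, hK₀, hlog⟩ := exists_log_one_add_inv_infDist_Xtr_le hdom
  have hlog2 : 0 < Real.log 2 := Real.log_pos one_lt_two
  refine ⟨(K₀ + 20) / Real.log 2 + 2, by positivity,
    fun ε hε0 hε1 t ht0 ht1 x hx hxd v ϖ hϖ => ?_⟩
  obtain ⟨σ, hσ⟩ := hlog ε hε0 hε1 t ht1 x hx hxd v
  have hB : Real.log 2 ≤ Real.log (1 + 1 / ε) :=
    Real.log_le_log two_pos (by linarith [one_lt_one_div hε0 hε1])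
  have hjap : 1 ≤ jap v := Real.one_le_sqrt.2 (by nlinarith [norm_nonneg v])
  have hsqrt : √(ϖ * jap v ^ 2) = √ϖ * jap v := by
    rw [Real.sqrt_mul (by linarith), Real.sqrt_sq (by linarith)]
  calc _ ≤ (K₀ + 2 * Real.log (1 + 1 / ε) + 20) / √(ϖ * jap v ^ 2) :=
        integral_exp_mul_le_of_le_add_abs_sub_rpow (by nlinarith) ht0.le
          (by linarith [hlog2]) hσ
    _ ≤ ((K₀ + 20) / Real.log 2 + 2) * Real.log (1 + 1 / ε) / √(ϖ * jap v ^ 2) := by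
        gcongr
        have : K₀ + 20 ≤ (K₀ + 20) / Real.log 2 * Real.log (1 + 1 / ε) := by
          rw [div_mul_eq_mul_div, le_div_iff₀ hlog2]
          gcongr
        linarith
    _ = _ := by rw [hsqrt]; ring

end
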